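/- arXiv:1309.0622 — 2 statements merged into one kernel-verified Lean document; each statement's English description precedes it below -/
import Mathlib

section
/- Let φ : [1,∞) → (0,∞) be concave, non-decreasing and differentiable, let ε_b ∈ (0,1), and assume H_φ(t) → ∞ as t → ∞ (so H_φ^{-1} is defined on [0,∞)). Then the sequence r(n) = φ(H_φ^{-1}(ε_b n))/φ(1) satisfies, for all n, m ≥ 0: r(n + m) − r(n) ≤ ε_b · φ'(H_φ^{-1}(ε_b n)) · r(n) · Σ_{k=1}^{m} r(k). -/
/-!
Write `x u = Hinv φ u`. Since `x' = φ ∘ x`, the function `u ↦ log φ (x u)` has derivative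
`φ' (x u)`, which is antitone, so it is concave on `[0, ∞)`; as `x 0 = 1`, this makes
`u ↦ φ (x u) / φ 1` submultiplicative. For `p ≤ q`, concavity of `φ`, antitonicity of `φ'` and
`x' = φ ∘ x` give `φ (x (q + ε)) - φ (x q) ≤ φ' (x p) · ε · φ (x (q + ε))`, and submultiplicativity
splits the last factor as `φ (x p) · φ (x (q + ε - p)) / φ 1`. Summing these increments over
`q = ε (n + k)`, `k < m`, gives the bound.
-/

open MeasureTheory ProbabilityTheory Filter Set

noncomputable def iterKernel {X : Type*} [MeasurableSpace X]
    (P : ℕ → Kernel X X) : ℕ → Kernel X X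
  | 0 => Kernel.id
  | n + 1 => (P (n + 1)).comp (iterKernel P n)

noncomputable def Hfun (φ : ℝ → ℝ) (t : ℝ) : ℝ := ∫ s in (1:ℝ)..t, (φ s)⁻¹

noncomputable def Hinv (φ : ℝ → ℝ) : ℝ → ℝ := Function.invFunOn (Hfun φ) (Set.Ici 1)

noncomputable def rate (φ : ℝ → ℝ) (εb : ℝ) (n : ℕ) : ℝ := φ (Hinv φ (εb * n)) / φ 1

noncomputable def deltaSeq (φ : ℝ → ℝ) (εb : ℝ) (k : ℕ) : ℝ := εb * deriv φ (Hinv φ (εb * k))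

noncomputable def bbar (φ : ℝ → ℝ) (εb bV : ℝ) : ℝ := 2 * bV + εb * φ 1

noncomputable def Mone (φ : ℝ → ℝ) (εb εν bV cV : ℝ) : ℝ :=
  rate φ εb 1 * (1 + 2 * rate φ εb 1 / (εb * φ 1) * ((bV + cV) / (1 - εν) - 1))

noncomputable def cstar (φ : ℝ → ℝ) (εb εν bV cV : ℝ) : ℝ :=
  ∑' j : ℕ, (1 - εν) ^ j * ∏ k ∈ Finset.Icc 1 j, (1 + deltaSeq φ εb k * Mone φ εb εν bV cV)

noncomputable def cconst (φ : ℝ → ℝ) (εb εν bV cV : ℝ) : ℝ :=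
  2 / (εb * φ 1) * (2 + bbar φ εb bV / εν +
    cstar φ εb εν bV cV * bbar φ εb bV * rate φ εb 1 * (1 + rate φ εb 1 / (εb * φ 1)))

noncomputable def Qmeas {X : Type*} [MeasurableSpace X]
    (P : ℕ → Kernel X X) (ν : ℕ → Measure X) (εν : ℝ) (k : ℕ) (x : X) : Measure X :=
  (ENNReal.ofReal (1 - εν))⁻¹ • (P k x - ENNReal.ofReal εν • ν k)

section Concave

variable {S : Set ℝ} {f : ℝ → ℝ} {x y : ℝ}

lemma ConcaveOn.sub_le_deriv_mul (hf : ConcaveOn ℝ S f) (hx : x ∈ S) (hy : y ∈ S) (hxy : x ≤ y)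
    (hfd : DifferentiableAt ℝ f x) : f y - f x ≤ deriv f x * (y - x) := by
  rcases hxy.eq_or_lt with rfl | hlt
  · simp
  have := hf.slope_le_deriv hx hy hlt hfd
  rwa [slope_def_field, div_le_iff₀ (sub_pos.mpr hlt)] at this

lemma ConcaveOn.map_add_add_map_zero_le (hf : ConcaveOn ℝ (Ici 0) f) (hx : 0 ≤ x) (hy : 0 ≤ y) :
    f (x + y) + f 0 ≤ f x + f y := by
  rcases (add_nonneg hx hy).eq_or_lt with hxy | hxy
  · obtain ⟨rfl, rfl⟩ : x = 0 ∧ y = 0 := ⟨by linarith, by linarith⟩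
    simp
  -- `x` and `y` are the convex combinations of `x + y` and `0` with swapped weights.
  have hcomb : ∀ z, 0 ≤ z → z ≤ x + y → z / (x + y) * f (x + y) + (1 - z / (x + y)) * f 0 ≤ f z :=
    fun z hz hzxy ↦ by
      have hw : z / (x + y) ≤ 1 := (div_le_one hxy).mpr hzxy
      simpa [smul_eq_mul, div_mul_cancel₀ z hxy.ne'] using
        hf.2 (mem_Ici.mpr hxy.le) self_mem_Ici (div_nonneg hz hxy.le) (sub_nonneg.mpr hw)
          (add_sub_cancel _ _)
  have hsum : x / (x + y) + y / (x + y) = 1 := by field_simp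
  linear_combination hcomb x hx (by linarith) + hcomb y hy (by linarith) - (f (x + y) - f 0) * hsum

end Concave

section RateFunction

variable {φ : ℝ → ℝ}

lemma Hfun_one : Hfun φ 1 = 0 := intervalIntegral.integral_same

lemma continuousOn_Hfun (hcont : ContinuousOn φ (Ici 1)) (hpos : ∀ t, 1 ≤ t → 0 < φ t) {b : ℝ} :
    ContinuousOn (Hfun φ) (Icc 1 b) := by
  rcases le_total 1 b with hb | hb
  · have hint : IntegrableOn (fun s ↦ (φ s)⁻¹) (uIcc 1 b) := by
      rw [uIcc_of_le hb]
      exact ((hcont.mono Icc_subset_Ici_self).inv₀ fun s hs ↦ (hpos s hs.1).ne').integrableOn_Icc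
    unfold Hfun
    simpa [uIcc_of_le hb] using intervalIntegral.continuousOn_primitive_interval hint
  · exact (subsingleton_Icc_of_ge hb).continuousOn _

lemma hasDerivAt_Hfun (hcont : ContinuousOn φ (Ici 1)) (hpos : ∀ t, 1 ≤ t → 0 < φ t) {t : ℝ}
    (ht : 1 < t) : HasDerivAt (Hfun φ) (φ t)⁻¹ t := by
  have hinv : ContinuousOn (fun s ↦ (φ s)⁻¹) (Ici 1) := hcont.inv₀ fun s hs ↦ (hpos s hs).ne'
  apply intervalIntegral.integral_hasDerivAt_right
  · exact (hinv.mono (by simp [uIcc_of_le ht.le, Icc_subset_Ici_self])).intervalIntegrable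
  · exact (hinv.mono Ioi_subset_Ici_self).stronglyMeasurableAtFilter isOpen_Ioi t ht
  · exact hinv.continuousAt (Ici_mem_nhds ht)

lemma exists_Hfun_sub_eq_div (hcont : ContinuousOn φ (Ici 1)) (hpos : ∀ t, 1 ≤ t → 0 < φ t)
    {x y : ℝ} (hx : 1 ≤ x) (hxy : x < y) :
    ∃ c ∈ Ioo x y, Hfun φ y - Hfun φ x = (y - x) / φ c := by
  obtain ⟨c, hc, h⟩ := exists_hasDerivAt_eq_slope (Hfun φ) (fun t ↦ (φ t)⁻¹) hxy
    ((continuousOn_Hfun hcont hpos).mono (Icc_subset_Icc_left hx))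
    fun t ht ↦ hasDerivAt_Hfun hcont hpos (hx.trans_lt ht.1)
  refine ⟨c, hc, ?_⟩
  rw [div_eq_mul_inv, h, mul_div_cancel₀ _ (sub_pos.mpr hxy).ne']

lemma strictMonoOn_Hfun (hcont : ContinuousOn φ (Ici 1)) (hpos : ∀ t, 1 ≤ t → 0 < φ t) :
    StrictMonoOn (Hfun φ) (Ici 1) := fun x hx y _ hxy ↦ by
  obtain ⟨c, hc, h⟩ := exists_Hfun_sub_eq_div hcont hpos hx hxy
  rw [← sub_pos, h]
  exact div_pos (sub_pos.mpr hxy) (hpos c (le_trans hx hc.1.le))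

lemma sub_le_Hfun_sub_mul (hcont : ContinuousOn φ (Ici 1)) (hpos : ∀ t, 1 ≤ t → 0 < φ t)
    (hmono : MonotoneOn φ (Ici 1)) {x y : ℝ} (hx : 1 ≤ x) (hxy : x ≤ y) :
    y - x ≤ (Hfun φ y - Hfun φ x) * φ y := by
  rcases hxy.eq_or_lt with rfl | hlt
  · simp
  obtain ⟨c, hc, h⟩ := exists_Hfun_sub_eq_div hcont hpos hx hlt
  have hc1 : 1 ≤ c := hx.trans hc.1.le
  rw [h, div_mul_eq_mul_div, le_div_iff₀ (hpos c hc1)]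
  exact mul_le_mul_of_nonneg_left (hmono hc1 (hx.trans hxy) hc.2.le) (sub_nonneg.mpr hxy)

lemma exists_log_sub_log_eq_deriv_mul (hdiff : ∀ t, 1 ≤ t → DifferentiableAt ℝ φ t)
    (hpos : ∀ t, 1 ≤ t → 0 < φ t) {x y : ℝ} (hx : 1 ≤ x) (hxy : x < y) :
    ∃ c ∈ Ioo x y, Real.log (φ y) - Real.log (φ x) = deriv φ c * (Hfun φ y - Hfun φ x) := by
  have hcont : ContinuousOn φ (Ici 1) :=
    continuousOn_of_forall_continuousAt fun t ht ↦ (hdiff t ht).continuousAt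
  obtain ⟨c, hc, h⟩ := exists_ratio_hasDerivAt_eq_ratio_slope (Hfun φ) (fun t ↦ (φ t)⁻¹) hxy
    ((continuousOn_Hfun hcont hpos).mono (Icc_subset_Icc_left hx))
    (fun t ht ↦ hasDerivAt_Hfun hcont hpos (hx.trans_lt ht.1))
    (fun t ↦ Real.log (φ t)) (fun t ↦ deriv φ t / φ t)
    (fun t ht ↦ ((hdiff t (hx.trans ht.1)).continuousAt.log
      (hpos t (hx.trans ht.1)).ne').continuousWithinAt)
    (fun t ht ↦ (hdiff t (hx.trans ht.1.le)).hasDerivAt.log (hpos t (hx.trans ht.1.le)).ne')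
  refine ⟨c, hc, ?_⟩
  have hφc := (hpos c (hx.trans hc.1.le)).ne'
  field_simp at h
  linarith

lemma surjOn_Hfun (hcont : ContinuousOn φ (Ici 1)) (hpos : ∀ t, 1 ≤ t → 0 < φ t)
    (hH : Tendsto (Hfun φ) atTop atTop) : SurjOn (Hfun φ) (Ici 1) (Ici 0) := fun u hu ↦ by
  obtain ⟨b, hub, hb⟩ := ((hH.eventually_ge_atTop u).and (eventually_ge_atTop 1)).exists
  obtain ⟨t, ht, htu⟩ := intermediate_value_Icc hb (continuousOn_Hfun hcont hpos)
    ⟨Hfun_one (φ := φ) ▸ hu, hub⟩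
  exact ⟨t, ht.1, htu⟩

lemma one_le_Hinv (hcont : ContinuousOn φ (Ici 1)) (hpos : ∀ t, 1 ≤ t → 0 < φ t)
    (hH : Tendsto (Hfun φ) atTop atTop) {u : ℝ} (hu : 0 ≤ u) : 1 ≤ Hinv φ u :=
  (surjOn_Hfun hcont hpos hH).mapsTo_invFunOn hu

lemma Hfun_Hinv (hcont : ContinuousOn φ (Ici 1)) (hpos : ∀ t, 1 ≤ t → 0 < φ t)
    (hH : Tendsto (Hfun φ) atTop atTop) {u : ℝ} (hu : 0 ≤ u) : Hfun φ (Hinv φ u) = u :=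
  (surjOn_Hfun hcont hpos hH).rightInvOn_invFunOn hu

lemma Hinv_zero (hcont : ContinuousOn φ (Ici 1)) (hpos : ∀ t, 1 ≤ t → 0 < φ t)
    (hH : Tendsto (Hfun φ) atTop atTop) : Hinv φ 0 = 1 :=
  (strictMonoOn_Hfun hcont hpos).injOn (one_le_Hinv hcont hpos hH le_rfl) self_mem_Ici
    (by rw [Hfun_Hinv hcont hpos hH le_rfl, Hfun_one])

lemma strictMonoOn_Hinv (hcont : ContinuousOn φ (Ici 1)) (hpos : ∀ t, 1 ≤ t → 0 < φ t)
    (hH : Tendsto (Hfun φ) atTop atTop) : StrictMonoOn (Hinv φ) (Ici 0) := fun u hu v hv huv ↦ by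
  rwa [← (strictMonoOn_Hfun hcont hpos).lt_iff_lt (one_le_Hinv hcont hpos hH hu)
    (one_le_Hinv hcont hpos hH hv), Hfun_Hinv hcont hpos hH hu, Hfun_Hinv hcont hpos hH hv]

lemma Hinv_sub_Hinv_le (hcont : ContinuousOn φ (Ici 1)) (hpos : ∀ t, 1 ≤ t → 0 < φ t)
    (hmono : MonotoneOn φ (Ici 1)) (hH : Tendsto (Hfun φ) atTop atTop) {u v : ℝ} (hu : 0 ≤ u)
    (huv : u ≤ v) : Hinv φ v - Hinv φ u ≤ (v - u) * φ (Hinv φ v) := by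
  have hv : 0 ≤ v := hu.trans huv
  simpa only [Hfun_Hinv hcont hpos hH hu, Hfun_Hinv hcont hpos hH hv] using
    sub_le_Hfun_sub_mul hcont hpos hmono (one_le_Hinv hcont hpos hH hu)
      ((strictMonoOn_Hinv hcont hpos hH).monotoneOn hu hv huv)

lemma exists_log_comp_Hinv_sub_eq (hdiff : ∀ t, 1 ≤ t → DifferentiableAt ℝ φ t)
    (hpos : ∀ t, 1 ≤ t → 0 < φ t) (hH : Tendsto (Hfun φ) atTop atTop) {u v : ℝ} (hu : 0 ≤ u)
    (huv : u < v) : ∃ c ∈ Ioo (Hinv φ u) (Hinv φ v),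
      Real.log (φ (Hinv φ v)) - Real.log (φ (Hinv φ u)) = deriv φ c * (v - u) := by
  have hcont : ContinuousOn φ (Ici 1) :=
    continuousOn_of_forall_continuousAt fun t ht ↦ (hdiff t ht).continuousAt
  have hv : 0 ≤ v := hu.trans huv.le
  simpa only [Hfun_Hinv hcont hpos hH hu, Hfun_Hinv hcont hpos hH hv] using
    exists_log_sub_log_eq_deriv_mul hdiff hpos (one_le_Hinv hcont hpos hH hu)
      (strictMonoOn_Hinv hcont hpos hH hu hv huv)

lemma concaveOn_log_comp_Hinv (hconc : ConcaveOn ℝ (Ici 1) φ)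
    (hdiff : ∀ t, 1 ≤ t → DifferentiableAt ℝ φ t) (hpos : ∀ t, 1 ≤ t → 0 < φ t)
    (hH : Tendsto (Hfun φ) atTop atTop) :
    ConcaveOn ℝ (Ici 0) (fun u ↦ Real.log (φ (Hinv φ u))) := by
  refine concaveOn_of_slope_anti_adjacent (convex_Ici 0) fun {u v w} hu _ huv hvw ↦ ?_
  have hv : 0 ≤ v := hu.trans huv.le
  obtain ⟨c, hc, hcuv⟩ := exists_log_comp_Hinv_sub_eq hdiff hpos hH hu huv
  obtain ⟨d, hd, hdvw⟩ := exists_log_comp_Hinv_sub_eq hdiff hpos hH hv hvw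
  have hcont : ContinuousOn φ (Ici 1) :=
    continuousOn_of_forall_continuousAt fun t ht ↦ (hdiff t ht).continuousAt
  have hc1 : 1 ≤ c := (one_le_Hinv hcont hpos hH hu).trans hc.1.le
  simp only [hcuv, hdvw, mul_div_cancel_right₀ _ (sub_pos.mpr huv).ne',
    mul_div_cancel_right₀ _ (sub_pos.mpr hvw).ne']
  exact hconc.antitoneOn_deriv hdiff hc1 (hc1.trans (hc.2.trans hd.1).le)
    (hc.2.trans hd.1).le

lemma phi_Hinv_add_mul_le (hconc : ConcaveOn ℝ (Ici 1) φ)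
    (hdiff : ∀ t, 1 ≤ t → DifferentiableAt ℝ φ t) (hpos : ∀ t, 1 ≤ t → 0 < φ t)
    (hH : Tendsto (Hfun φ) atTop atTop) {a b : ℝ} (ha : 0 ≤ a) (hb : 0 ≤ b) :
    φ (Hinv φ (a + b)) * φ 1 ≤ φ (Hinv φ a) * φ (Hinv φ b) := by
  have hcont : ContinuousOn φ (Ici 1) :=
    continuousOn_of_forall_continuousAt fun t ht ↦ (hdiff t ht).continuousAt
  have hφHinv : ∀ u, 0 ≤ u → 0 < φ (Hinv φ u) := fun u hu ↦ hpos _ (one_le_Hinv hcont hpos hH hu)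
  have h := (concaveOn_log_comp_Hinv hconc hdiff hpos hH).map_add_add_map_zero_le ha hb
  simp only [Hinv_zero hcont hpos hH] at h
  rw [← Real.log_mul (hφHinv _ (add_nonneg ha hb)).ne' (hpos 1 le_rfl).ne',
    ← Real.log_mul (hφHinv a ha).ne' (hφHinv b hb).ne'] at h
  exact (Real.log_le_log_iff (mul_pos (hφHinv _ (add_nonneg ha hb)) (hpos 1 le_rfl))
    (mul_pos (hφHinv a ha) (hφHinv b hb))).mp h

lemma phi_Hinv_add_sub_le (hconc : ConcaveOn ℝ (Ici 1) φ) (hmono : MonotoneOn φ (Ici 1))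
    (hdiff : ∀ t, 1 ≤ t → DifferentiableAt ℝ φ t) (hpos : ∀ t, 1 ≤ t → 0 < φ t)
    (hH : Tendsto (Hfun φ) atTop atTop) {p q ε : ℝ} (hp : 0 ≤ p) (hpq : p ≤ q) (hε : 0 ≤ ε) :
    φ (Hinv φ (q + ε)) - φ (Hinv φ q) ≤
      ε * deriv φ (Hinv φ p) * (φ (Hinv φ p) * φ (Hinv φ (q + ε - p)) / φ 1) := by
  have hcont : ContinuousOn φ (Ici 1) :=
    continuousOn_of_forall_continuousAt fun t ht ↦ (hdiff t ht).continuousAt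
  have hq : 0 ≤ q := hp.trans hpq
  have hqε : 0 ≤ q + ε := add_nonneg hq hε
  have hHinv_mono := (strictMonoOn_Hinv hcont hpos hH).monotoneOn
  have hx : 1 ≤ Hinv φ p := one_le_Hinv hcont hpos hH hp
  have hy : 1 ≤ Hinv φ q := one_le_Hinv hcont hpos hH hq
  have hyz : Hinv φ q ≤ Hinv φ (q + ε) := hHinv_mono hq hqε (le_add_of_nonneg_right hε)
  have hderiv_nonneg : 0 ≤ deriv φ (Hinv φ p) := by
    rw [← (hdiff _ hx).derivWithin (uniqueDiffOn_Ici 1 _ hx)]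
    exact hmono.derivWithin_nonneg
  have hderiv_anti : deriv φ (Hinv φ q) ≤ deriv φ (Hinv φ p) :=
    hconc.antitoneOn_deriv hdiff hx hy (hHinv_mono hp hq hpq)
  have hsubmul : φ (Hinv φ (q + ε)) ≤ φ (Hinv φ p) * φ (Hinv φ (q + ε - p)) / φ 1 := by
    rw [le_div_iff₀ (hpos 1 le_rfl)]
    simpa using phi_Hinv_add_mul_le hconc hdiff hpos hH hp (by linarith : 0 ≤ q + ε - p)
  calc φ (Hinv φ (q + ε)) - φ (Hinv φ q)
      ≤ deriv φ (Hinv φ q) * (Hinv φ (q + ε) - Hinv φ q) :=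
        hconc.sub_le_deriv_mul hy (hy.trans hyz) hyz (hdiff _ hy)
    _ ≤ deriv φ (Hinv φ p) * (ε * φ (Hinv φ (q + ε))) := by
        refine mul_le_mul hderiv_anti ?_ (sub_nonneg.mpr hyz) hderiv_nonneg
        simpa using Hinv_sub_Hinv_le hcont hpos hmono hH hq (le_add_of_nonneg_right hε)
    _ ≤ deriv φ (Hinv φ p) * (ε * (φ (Hinv φ p) * φ (Hinv φ (q + ε - p)) / φ 1)) := by
        gcongr
    _ = ε * deriv φ (Hinv φ p) * (φ (Hinv φ p) * φ (Hinv φ (q + ε - p)) / φ 1) := by ring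

lemma rate_add_succ_sub_le (hconc : ConcaveOn ℝ (Ici 1) φ) (hmono : MonotoneOn φ (Ici 1))
    (hdiff : ∀ t, 1 ≤ t → DifferentiableAt ℝ φ t) (hpos : ∀ t, 1 ≤ t → 0 < φ t)
    (hH : Tendsto (Hfun φ) atTop atTop) {ε : ℝ} (hε : 0 ≤ ε) (n m : ℕ) :
    rate φ ε (n + (m + 1)) - rate φ ε (n + m) ≤
      ε * deriv φ (Hinv φ (ε * n)) * rate φ ε n * rate φ ε (m + 1) := by
  have h := phi_Hinv_add_sub_le hconc hmono hdiff hpos hH (mul_nonneg hε n.cast_nonneg)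
    (mul_le_mul_of_nonneg_left (by simp : (n : ℝ) ≤ (n + m : ℕ)) hε) hε
  have hq : ε * ((n + m : ℕ) : ℝ) + ε = ε * ((n + (m + 1) : ℕ) : ℝ) := by push_cast; ring
  have hr : ε * ((n + m : ℕ) : ℝ) + ε - ε * n = ε * ((m + 1 : ℕ) : ℝ) := by push_cast; ring
  rw [hr, hq] at h
  unfold rate
  rw [← sub_div]
  refine (div_le_div_of_nonneg_right h (hpos 1 le_rfl).le).trans_eq ?_
  ring

end RateFunction

/-- Lemma 5.4 (ii): increment estimate for the rate sequence. -/
theorem statement13 (φ : ℝ → ℝ)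
    (hφconc : ConcaveOn ℝ (Set.Ici 1) φ)
    (hφmono : MonotoneOn φ (Set.Ici 1))
    (hφdiff : ∀ t, 1 ≤ t → DifferentiableAt ℝ φ t)
    (hφpos : ∀ t, 1 ≤ t → 0 < φ t)
    (hH : Tendsto (Hfun φ) atTop atTop)
    (εb : ℝ) (hεb : εb ∈ Set.Ioo (0:ℝ) 1) :
    ∀ n m : ℕ, rate φ εb (n + m) - rate φ εb n ≤
      εb * deriv φ (Hinv φ (εb * n)) * rate φ εb n *
        ∑ k ∈ Finset.Icc 1 m, rate φ εb k := by
  intro n m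
  induction m with
  | zero => simp
  | succ m ih =>
    rw [Finset.sum_Icc_succ_top (by omega), mul_add]
    linarith [rate_add_succ_sub_le hφconc hφmono hφdiff hφpos hH hεb.1.le n m]
end

section
/- Assume Condition (D) and consider the coupling construction. Then for all (x, x') ∈ X²: E_{x,x',0}[ Σ_{n=0}^{τ−1} φ(V̄(X_n, X'_n)) ] ≤ (1/ε_b) V̄(x, x') + b̄/(ε_b ε_ν), where V̄(x, x') = V(x) + V(x') − 1 and b̄ = 2b_V + ε_b φ(1). -/
/-
It suffices to find `W ≥ 0` with `φ(V̄) 1{D = 0} + P̄ₖ W ≤ W` for all `k ≥ 1`: summing this along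
the chain bounds the expected sum by `W(x, x', 0)`. Take `W = εb⁻¹ V̄ + b̄ / (εb εν)` on uncoupled
states and `W = 0` on coupled ones.
Outside `C × C` both coordinates move independently by `Pₖ`, and the drift of `V` lowers `W` by
at least `εb⁻¹ (φ(V x) + φ(V x') - b_V 1_C(x) - b_V 1_C(x'))`; a coordinate outside `C`, where
`b_V ≤ (1 - εb) φ(V)`, pays for the `b_V` of the other one.
Inside `C × C` the chains couple with probability `εν`, which sets `W` to `0`, and otherwise move
by the residual kernels, which satisfy `(1 - εν) Qₖ V ≤ Pₖ V - εν`; the constant is chosen so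
that `εν · b̄ / (εb εν) = 2 εb⁻¹ b_V + φ(1)` absorbs both `b_V`.
Concavity of `φ` enters through `φ(a + b - 1) + φ(1) ≤ φ(a) + φ(b)`.
-/

open MeasureTheory ProbabilityTheory Filter Set

open scoped ENNReal

lemma ConcaveOn.map_add_sub_add_map_le {f : ℝ → ℝ} {c a b : ℝ} (hf : ConcaveOn ℝ (Ici c) f)
    (ha : c ≤ a) (hb : c ≤ b) : f (a + b - c) + f c ≤ f a + f b := by
  obtain rfl | hca := eq_or_lt_of_le ha
  · simp [add_comm]
  set t := a + b - c
  have hct : 0 < t - c := by linarith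
  have hct' : t - c ≠ 0 := hct.ne'
  have interp : ∀ x, c ≤ x → x ≤ t → (x - c) * f t + (t - x) * f c ≤ (t - c) * f x := by
    intro x hcx hxt
    have h := hf.2 (mem_Ici.2 (by linarith) : t ∈ Ici c) (mem_Ici.2 le_rfl)
      (div_nonneg (sub_nonneg.2 hcx) hct.le) (div_nonneg (sub_nonneg.2 hxt) hct.le)
      (by field_simp; ring)
    have hx : ((x - c) / (t - c)) • t + ((t - x) / (t - c)) • c = x := by
      simp only [smul_eq_mul]; field_simp; ring
    rw [hx, smul_eq_mul, smul_eq_mul] at h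
    calc (x - c) * f t + (t - x) * f c
        = (t - c) * ((x - c) / (t - c) * f t + (t - x) / (t - c) * f c) := by field_simp
      _ ≤ (t - c) * f x := mul_le_mul_of_nonneg_left h hct.le
  have hfa := interp a ha (by linarith)
  have hfb := interp b hb (by linarith)
  refine le_of_mul_le_mul_left ?_ hct
  linear_combination hfa + hfb

lemma tsum_lintegral_iterKernel_le {Y : Type*} [MeasurableSpace Y] (κ : ℕ → Kernel Y Y)
    {f H : Y → ℝ≥0∞} (hH : Measurable H)
    (hdrift : ∀ k, 1 ≤ k → ∀ y, f y + ∫⁻ z, H z ∂(κ k y) ≤ H y) (y : Y) :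
    ∑' n, ∫⁻ z, f z ∂(iterKernel κ n y) ≤ H y := by
  have hpartial : ∀ N, (∑ n ∈ Finset.range N, ∫⁻ z, f z ∂(iterKernel κ n y)) +
      ∫⁻ z, H z ∂(iterKernel κ N y) ≤ H y := by
    intro N
    induction N with
    | zero => simp [iterKernel, Kernel.id_apply, lintegral_dirac' _ hH]
    | succ N ih =>
      calc (∑ n ∈ Finset.range (N + 1), ∫⁻ z, f z ∂(iterKernel κ n y)) +
            ∫⁻ z, H z ∂(iterKernel κ (N + 1) y)
          = (∑ n ∈ Finset.range N, ∫⁻ z, f z ∂(iterKernel κ n y)) +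
            ∫⁻ z, (f z + ∫⁻ w, H w ∂(κ (N + 1) z)) ∂(iterKernel κ N y) := by
            rw [Finset.sum_range_succ, add_assoc, lintegral_add_right _ hH.lintegral_kernel,
              iterKernel, Kernel.lintegral_comp _ _ _ hH]
        _ ≤ (∑ n ∈ Finset.range N, ∫⁻ z, f z ∂(iterKernel κ n y)) +
            ∫⁻ z, H z ∂(iterKernel κ N y) := by
            gcongr with z
            exact hdrift (N + 1) N.succ_pos z
        _ ≤ H y := ih
  rw [ENNReal.tsum_eq_iSup_nat]
  exact iSup_le fun N => le_self_add.trans (hpartial N)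

lemma const_le_integral {X : Type*} [MeasurableSpace X] {μ : Measure X} [IsProbabilityMeasure μ]
    {V : X → ℝ} {c : ℝ} (hc : ∀ x, c ≤ V x) (hV : Integrable V μ) : c ≤ ∫ x, V x ∂μ := by
  simpa using integral_mono (integrable_const c) hV hc

lemma drift_const_pos {X : Type*} [MeasurableSpace X] [Nonempty X] (κ : Kernel X X)
    [IsMarkovKernel κ] {C : Set X} {V : X → ℝ} {φ : ℝ → ℝ} {b : ℝ} (hV1 : ∀ x, 1 ≤ V x)
    (hφmono : MonotoneOn φ (Ici 1)) (hφ1 : 0 < φ 1) (hVint : ∀ x, Integrable V (κ x))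
    (hdrift : ∀ x, ∫ y, V y ∂(κ x) ≤ V x - φ (V x) + b * C.indicator 1 x) : 0 < b := by
  have hbdd : BddBelow (range V) := ⟨1, by rintro _ ⟨y, rfl⟩; exact hV1 y⟩
  obtain ⟨y, hy⟩ : ∃ y, V y < (⨅ z, V z) + φ 1 := exists_lt_of_ciInf_lt (by linarith)
  have hinf_le : (⨅ z, V z) ≤ ∫ z, V z ∂(κ y) :=
    const_le_integral (fun z => ciInf_le hbdd z) (hVint y)
  have hφy : φ 1 ≤ φ (V y) := hφmono (mem_Ici.2 le_rfl) (mem_Ici.2 (hV1 y)) (hV1 y)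
  -- a point where `V` is almost minimal cannot drift downwards, so `C` must push it up
  have hpush : 0 < b * C.indicator 1 y := by linarith [hdrift y]
  by_cases hyC : y ∈ C <;> simp_all

lemma lintegral_prod_ofReal_add {X Y : Type*} [MeasurableSpace X] [MeasurableSpace Y]
    {μ : Measure X} {ν : Measure Y} [IsProbabilityMeasure μ] [IsProbabilityMeasure ν]
    {F : X → ℝ} {G : Y → ℝ} (hF : Integrable F μ) (hG : Integrable G ν)
    (hFG : ∀ x y, 0 ≤ F x + G y) :
    ∫⁻ p, ENNReal.ofReal (F p.1 + G p.2) ∂(μ.prod ν) =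
      ENNReal.ofReal (∫ x, F x ∂μ + ∫ y, G y ∂ν) := by
  have hint : Integrable (fun p : X × Y => F p.1 + G p.2) (μ.prod ν) :=
    (hF.comp_fst ν).add (hG.comp_snd μ)
  rw [← ofReal_integral_eq_lintegral_ofReal hint (Eventually.of_forall fun p => hFG p.1 p.2),
    integral_add (hF.comp_fst ν) (hG.comp_snd μ), integral_fun_fst, integral_fun_snd]
  simp

section Qmeas

variable {X : Type*} [MeasurableSpace X] {P : ℕ → Kernel X X} {ν : ℕ → Measure X} {ε : ℝ}
  {k : ℕ} {x : X}

lemma ofReal_smul_Qmeas (hε : ε < 1) :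
    ENNReal.ofReal (1 - ε) • Qmeas P ν ε k x = P k x - ENNReal.ofReal ε • ν k := by
  rw [Qmeas, smul_smul, ENNReal.mul_inv_cancel (by simpa using hε) ENNReal.ofReal_ne_top,
    one_smul]

lemma integrable_Qmeas {V : X → ℝ} (hε : ε < 1) (hV : Integrable V (P k x)) :
    Integrable V (Qmeas P ν ε k x) :=
  (hV.mono_measure Measure.sub_le).smul_measure (ENNReal.inv_ne_top.2 (by simpa using hε))

variable [IsProbabilityMeasure (P k x)] [IsProbabilityMeasure (ν k)]

lemma isProbabilityMeasure_Qmeas (hε : ε ∈ Ioo 0 1) (hle : ENNReal.ofReal ε • ν k ≤ P k x) :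
    IsProbabilityMeasure (Qmeas P ν ε k x) := by
  have : IsFiniteMeasure (ENNReal.ofReal ε • ν k) := isFiniteMeasure_of_le _ hle
  constructor
  have hsub : (P k x - ENNReal.ofReal ε • ν k) univ = ENNReal.ofReal (1 - ε) := by
    rw [Measure.sub_apply MeasurableSet.univ hle]
    simp [ENNReal.ofReal_sub 1 hε.1.le]
  rw [Qmeas, Measure.smul_apply, hsub, smul_eq_mul,
    ENNReal.inv_mul_cancel (by simpa using hε.2) ENNReal.ofReal_ne_top]

lemma integral_Qmeas_le (hε : ε ∈ Ioo 0 1) (hle : ENNReal.ofReal ε • ν k ≤ P k x)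
    {V : X → ℝ} (hV1 : ∀ y, 1 ≤ V y) (hV : Integrable V (P k x)) :
    (1 - ε) * ∫ y, V y ∂(Qmeas P ν ε k x) ≤ ∫ y, V y ∂(P k x) - ε := by
  have : IsFiniteMeasure (ENNReal.ofReal ε • ν k) := isFiniteMeasure_of_le _ hle
  have hVν : Integrable V (ENNReal.ofReal ε • ν k) := hV.mono_measure hle
  have hmass : ε ≤ ∫ y, V y ∂(ENNReal.ofReal ε • ν k) := by
    simpa [hε.1.le] using integral_mono (integrable_const 1) hVν hV1
  have hsplit := integral_add_measure
    (hV.mono_measure (Measure.sub_le (ν := ENNReal.ofReal ε • ν k))) hVν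
  rw [Measure.sub_add_cancel_of_le hle, ← ofReal_smul_Qmeas hε.2, integral_smul_measure,
    ENNReal.toReal_ofReal (by linarith [hε.2]), smul_eq_mul] at hsplit
  linarith

end Qmeas

section Coupling

variable {X : Type*} [MeasurableSpace X] {V : X → ℝ} {u K : ℝ}

noncomputable def pairLyapunov (V : X → ℝ) (u K : ℝ) (s : (X × X) × Bool) : ℝ≥0∞ :=
  if s.2 = false then ENNReal.ofReal (u * (V s.1.1 + V s.1.2 - 1) + K) else 0

lemma measurable_pairLyapunov (hV : Measurable V) : Measurable (pairLyapunov V u K) :=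
  Measurable.ite (measurable_snd (measurableSet_singleton false)) (by fun_prop) measurable_const

lemma lintegral_pairLyapunov_prod {μ μ' : Measure X} [IsProbabilityMeasure μ]
    [IsProbabilityMeasure μ'] (hV1 : ∀ x, 1 ≤ V x) (hu : 0 ≤ u) (hK : 0 ≤ K)
    (hμ : Integrable V μ) (hμ' : Integrable V μ') :
    ∫⁻ p, pairLyapunov V u K (p, false) ∂(μ.prod μ') =
      ENNReal.ofReal (u * (∫ y, V y ∂μ + ∫ y, V y ∂μ' - 1) + K) := by
  calc ∫⁻ p, pairLyapunov V u K (p, false) ∂(μ.prod μ')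
      = ∫⁻ p, ENNReal.ofReal (u * V p.1 + (u * V p.2 - (u - K))) ∂(μ.prod μ') := by
        simp only [pairLyapunov, if_true]
        congr! 3
        ring
    _ = ENNReal.ofReal (∫ y, u * V y ∂μ + ∫ y, (u * V y - (u - K)) ∂μ') :=
        lintegral_prod_ofReal_add (hμ.const_mul u) ((hμ'.const_mul u).sub (integrable_const _))
          fun a b => by simp only [Pi.sub_apply]; nlinarith [hV1 a, hV1 b]
    _ = ENNReal.ofReal (u * (∫ y, V y ∂μ + ∫ y, V y ∂μ' - 1) + K) := by
        rw [integral_sub (hμ'.const_mul u) (integrable_const _), integral_const_mul,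
          integral_const_mul]
        simp only [integral_const, probReal_univ, one_smul]
        ring_nf

lemma lintegral_pairLyapunov_coupled (hV : Measurable V)
    {κ : Kernel ((X × X) × Bool) ((X × X) × Bool)} {μ : X → Measure X}
    (hdiag : ∀ x, κ ((x, x), true) = (μ x).map fun y => ((y, y), true))
    (hne : ∀ x x', x ≠ x' → κ ((x, x'), true) = Measure.dirac ((x, x'), true)) (a b : X) :
    ∫⁻ s, pairLyapunov V u K s ∂(κ ((a, b), true)) = 0 := by
  obtain rfl | hab := eq_or_ne a b
  · rw [hdiag, lintegral_map (measurable_pairLyapunov hV) (by fun_prop)]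
    simp [pairLyapunov]
  · rw [hne a b hab, lintegral_dirac' _ (measurable_pairLyapunov hV)]
    simp [pairLyapunov]

end Coupling

section Drift

variable {X : Type*} [MeasurableSpace X] {C : Set X} {V : X → ℝ} {φ : ℝ → ℝ} {bV K : ℝ}
  {κ : Kernel ((X × X) × Bool) ((X × X) × Bool)} {a b : X}

lemma pairLyapunov_drift_of_not_mem {μ μ' : Measure X} [IsProbabilityMeasure μ]
    [IsProbabilityMeasure μ'] {εb : ℝ} (hφ : ConcaveOn ℝ (Ici 1) φ)
    (hφpos : ∀ t, 1 ≤ t → 0 < φ t) (hV : Measurable V) (hV1 : ∀ x, 1 ≤ V x)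
    (hεb : εb ∈ Ioo 0 1) (hbV : 0 ≤ bV) (hK : 0 ≤ K) (hμ : Integrable V μ) (hμ' : Integrable V μ')
    (hda : ∫ y, V y ∂μ ≤ V a - φ (V a) + bV * C.indicator 1 a)
    (hdb : ∫ y, V y ∂μ' ≤ V b - φ (V b) + bV * C.indicator 1 b)
    (hout : ∀ x ∉ C, bV / (1 - εb) ≤ φ (V x)) (hab : ¬(a ∈ C ∧ b ∈ C))
    (hκ : κ ((a, b), false) = (μ.prod μ').map fun p => (p, false)) :
    ENNReal.ofReal (φ (V a + V b - 1)) + ∫⁻ s, pairLyapunov V εb⁻¹ K s ∂(κ ((a, b), false)) ≤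
      pairLyapunov V εb⁻¹ K ((a, b), false) := by
  set u := εb⁻¹
  have hu : 1 ≤ u := one_le_inv₀ hεb.1 |>.2 hεb.2.le
  rw [hκ, lintegral_map (measurable_pairLyapunov hV) (by fun_prop),
    lintegral_pairLyapunov_prod hV1 (by linarith) hK hμ hμ']
  have hpa := const_le_integral hV1 hμ
  have hpb := const_le_integral hV1 hμ'
  simp only [pairLyapunov, if_true]
  rw [← ENNReal.ofReal_add (hφpos (V a + V b - 1) (by linarith [hV1 a, hV1 b])).le
    (by nlinarith)]
  refine ENNReal.ofReal_le_ofReal ?_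
  have hgain_in : ∀ z ∈ C, ∀ p, p ≤ V z - φ (V z) + bV * C.indicator 1 z →
      φ (V z) - u * bV ≤ u * (V z - p) := by
    intro z hz p hp
    rw [indicator_of_mem hz, Pi.one_apply, mul_one] at hp
    have := le_mul_of_one_le_left (hφpos _ (hV1 z)).le hu
    nlinarith
  have hgain_out : ∀ z ∉ C, ∀ p, p ≤ V z - φ (V z) + bV * C.indicator 1 z →
      φ (V z) + u * bV ≤ u * (V z - p) := by
    intro z hz p hp
    rw [indicator_of_notMem hz, mul_zero, add_zero] at hp
    have hb := (div_le_iff₀ (sub_pos.2 hεb.2)).1 (hout z hz)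
    have hub : u * bV ≤ (u - 1) * φ (V z) :=
      calc u * bV ≤ u * (φ (V z) * (1 - εb)) := by gcongr
        _ = (u - 1) * φ (V z) := by simp only [u]; field_simp [hεb.1.ne']
    nlinarith
  have hcav := hφ.map_add_sub_add_map_le (hV1 a) (hV1 b)
  have hφ1 := hφpos 1 le_rfl
  by_cases ha : a ∈ C
  · linarith [hgain_in a ha _ hda, hgain_out b (fun hb => hab ⟨ha, hb⟩) _ hdb]
  · by_cases hb : b ∈ C
    · linarith [hgain_out a ha _ hda, hgain_in b hb _ hdb]
    · linarith [hgain_out a ha _ hda, hgain_out b hb _ hdb, mul_nonneg (by linarith : 0 ≤ u) hbV]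

lemma pairLyapunov_drift_of_mem {P : ℕ → Kernel X X} {ν : ℕ → Measure X} {ε u : ℝ} {k : ℕ}
    [IsProbabilityMeasure (P k a)] [IsProbabilityMeasure (P k b)] [IsProbabilityMeasure (ν k)]
    (hφ : ConcaveOn ℝ (Ici 1) φ) (hφpos : ∀ t, 1 ≤ t → 0 < φ t) (hV : Measurable V)
    (hV1 : ∀ x, 1 ≤ V x) (hε : ε ∈ Ioo 0 1) (hu : 1 ≤ u) (hK : 0 ≤ K)
    (hεK : ε * K = 2 * u * bV + φ 1) (hVa : Integrable V (P k a)) (hVb : Integrable V (P k b))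
    (hda : ∫ y, V y ∂(P k a) ≤ V a - φ (V a) + bV)
    (hdb : ∫ y, V y ∂(P k b) ≤ V b - φ (V b) + bV)
    (hνa : ENNReal.ofReal ε • ν k ≤ P k a) (hνb : ENNReal.ofReal ε • ν k ≤ P k b)
    (hκ : κ ((a, b), false) =
      ENNReal.ofReal ε • ((ν k).map fun y => ((y, y), true)) +
      ENNReal.ofReal (1 - ε) •
        (((Qmeas P ν ε k a).prod (Qmeas P ν ε k b)).map fun p => (p, false))) :
    ENNReal.ofReal (φ (V a + V b - 1)) + ∫⁻ s, pairLyapunov V u K s ∂(κ ((a, b), false)) ≤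
      pairLyapunov V u K ((a, b), false) := by
  have := isProbabilityMeasure_Qmeas hε hνa
  have := isProbabilityMeasure_Qmeas hε hνb
  have hQa := integrable_Qmeas (ν := ν) hε.2 hVa
  have hQb := integrable_Qmeas (ν := ν) hε.2 hVb
  have hmeas := measurable_pairLyapunov (u := u) (K := K) hV
  rw [hκ, lintegral_add_measure, lintegral_smul_measure, lintegral_smul_measure,
    lintegral_map hmeas (by fun_prop), lintegral_map hmeas (by fun_prop),
    lintegral_pairLyapunov_prod hV1 (by linarith) hK hQa hQb]
  have hqa := integral_Qmeas_le hε hνa hV1 hVa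
  have hqb := integral_Qmeas_le hε hνb hV1 hVb
  have hqa1 := const_le_integral hV1 hQa
  have hqb1 := const_le_integral hV1 hQb
  simp only [pairLyapunov, if_true, Bool.true_eq_false, if_false, lintegral_zero, smul_eq_mul,
    mul_zero, zero_add]
  rw [← ENNReal.ofReal_mul (by linarith [hε.2]), ← ENNReal.ofReal_add
    (hφpos (V a + V b - 1) (by linarith [hV1 a, hV1 b])).le
    (mul_nonneg (by linarith [hε.2]) (by nlinarith))]
  refine ENNReal.ofReal_le_ofReal ?_
  have hcav := hφ.map_add_sub_add_map_le (hV1 a) (hV1 b)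
  have hua := mul_le_mul_of_nonneg_left (hqa.trans (sub_le_sub_right hda ε)) (by linarith : 0 ≤ u)
  have hub := mul_le_mul_of_nonneg_left (hqb.trans (sub_le_sub_right hdb ε)) (by linarith : 0 ≤ u)
  have hφu : φ (V a) + φ (V b) ≤ u * (φ (V a) + φ (V b)) :=
    le_mul_of_one_le_left (add_pos (hφpos _ (hV1 a)) (hφpos _ (hV1 b))).le hu
  linarith [hφpos 1 le_rfl, mul_pos hε.1 (by linarith : (0 : ℝ) < u)]

end Drift

theorem statement14_general {X : Type*} [MeasurableSpace X]
    (P : ℕ → Kernel X X) (hP : ∀ k, IsMarkovKernel (P k))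
    (C : Set X)
    (V : X → ℝ) (hVmeas : Measurable V) (hV1 : ∀ x, 1 ≤ V x)
    (φ : ℝ → ℝ)
    (hφconc : ConcaveOn ℝ (Set.Ici 1) φ)
    (hφmono : MonotoneOn φ (Set.Ici 1))
    (hφpos : ∀ t, 1 ≤ t → 0 < φ t)
    (ν : ℕ → Measure X) (hν : ∀ k, IsProbabilityMeasure (ν k))
    (εν εb : ℝ) (hεν : εν ∈ Set.Ioo (0:ℝ) 1) (hεb : εb ∈ Set.Ioo (0:ℝ) 1)
    (bV : ℝ)
    (hVint : ∀ k, 1 ≤ k → ∀ x, Integrable V (P k x))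
    (hdrift : ∀ k, 1 ≤ k → ∀ x,
      ∫ y, V y ∂(P k x) ≤ V x - φ (V x) + bV * C.indicator 1 x)
    (hminor : ∀ k, 1 ≤ k → ∀ x ∈ C, ∀ A : Set X, MeasurableSet A →
      ENNReal.ofReal εν * ν k A ≤ P k x A)
    (hout : ∀ x ∉ C, bV / (1 - εb) ≤ φ (V x))
    -- the coupling construction (Definition 5.1); the flag `true` indicates coupling:
    (Pbar : ℕ → Kernel ((X × X) × Bool) ((X × X) × Bool))
    (hbar_in : ∀ k, 1 ≤ k → ∀ x x' : X, x ∈ C → x' ∈ C →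
      Pbar k ((x, x'), false) =
        ENNReal.ofReal εν • ((ν k).map fun y => ((y, y), true)) +
        ENNReal.ofReal (1 - εν) •
          (((Qmeas P ν εν k x).prod (Qmeas P ν εν k x')).map fun p => (p, false)))
    (hbar_out : ∀ k, 1 ≤ k → ∀ x x' : X, ¬(x ∈ C ∧ x' ∈ C) →
      Pbar k ((x, x'), false) =
        (((P k x).prod (P k x')).map fun p => (p, false)))
    (hbar_diag : ∀ k, 1 ≤ k → ∀ x : X,
      Pbar k ((x, x), true) = (P k x).map fun y => ((y, y), true))
    (hbar_ne : ∀ k, 1 ≤ k → ∀ x x' : X, x ≠ x' →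
      Pbar k ((x, x'), true) = Measure.dirac ((x, x'), true)) :
    ∀ x x' : X,
      ∑' n : ℕ, ∫⁻ s : (X × X) × Bool,
          (if s.2 = false then ENNReal.ofReal (φ (V s.1.1 + V s.1.2 - 1)) else 0)
            ∂(iterKernel Pbar n ((x, x'), false)) ≤
        ENNReal.ofReal (εb⁻¹ * (V x + V x' - 1) + bbar φ εb bV / (εb * εν)) := by
  intro x x'
  have : Nonempty X := ⟨x⟩
  have hbV : 0 < bV := by
    have := hP 1
    exact drift_const_pos (P 1) hV1 hφmono (hφpos 1 le_rfl) (hVint 1 le_rfl) (hdrift 1 le_rfl)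
  have hu : 1 ≤ εb⁻¹ := one_le_inv₀ hεb.1 |>.2 hεb.2.le
  set K := bbar φ εb bV / (εb * εν)
  have hK : 0 ≤ K := div_nonneg (by unfold bbar; nlinarith [hφpos 1 le_rfl, hεb.1])
    (mul_pos hεb.1 hεν.1).le
  have hεK : εν * K = 2 * εb⁻¹ * bV + φ 1 := by
    simp only [K, bbar]; field_simp [hεb.1.ne', hεν.1.ne']
  have hstep : ∀ k, 1 ≤ k → ∀ s : (X × X) × Bool,
      (if s.2 = false then ENNReal.ofReal (φ (V s.1.1 + V s.1.2 - 1)) else 0) +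
        ∫⁻ t, pairLyapunov V εb⁻¹ K t ∂(Pbar k s) ≤ pairLyapunov V εb⁻¹ K s := by
    rintro k hk ⟨⟨a, b⟩, _ | _⟩
    · have := hP k
      have := hν k
      have hminor' : ∀ z ∈ C, ENNReal.ofReal εν • ν k ≤ P k z := fun z hz =>
        Measure.le_intro fun A hA _ => by simpa using hminor k hk z hz A hA
      by_cases hab : a ∈ C ∧ b ∈ C
      · exact pairLyapunov_drift_of_mem hφconc hφpos hVmeas hV1 hεν hu hK hεK (hVint k hk a)
          (hVint k hk b) (by simpa [hab.1] using hdrift k hk a)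
          (by simpa [hab.2] using hdrift k hk b) (hminor' a hab.1) (hminor' b hab.2)
          (hbar_in k hk a b hab.1 hab.2)
      · exact pairLyapunov_drift_of_not_mem hφconc hφpos hVmeas hV1 hεb hbV.le hK (hVint k hk a)
          (hVint k hk b) (hdrift k hk a) (hdrift k hk b) hout hab (hbar_out k hk a b hab)
    · rw [lintegral_pairLyapunov_coupled hVmeas (hbar_diag k hk) (hbar_ne k hk)]
      simp [pairLyapunov]
  exact (tsum_lintegral_iterKernel_le Pbar (measurable_pairLyapunov hVmeas) hstep _).trans_eq
    (by simp [pairLyapunov])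

/-- Lemma 5.5.  Since the coupling flag is absorbing, the event `{τ > n}` coincides
with `{D_n = false}`, so `E[∑_{n<τ} φ(V̄(X_n,X'_n))] = ∑_n E[φ(V̄(X_n,X'_n)) 1{D_n = false}]`,
each term being an integral against the n-step marginal of the coupling chain. -/
theorem statement14 {X : Type*} [MeasurableSpace X]
    (P : ℕ → Kernel X X) (hP : ∀ k, IsMarkovKernel (P k))
    (C : Set X) (hC : MeasurableSet C)
    (V : X → ℝ) (hVmeas : Measurable V) (hV1 : ∀ x, 1 ≤ V x)
    (φ : ℝ → ℝ)
    (hφconc : ConcaveOn ℝ (Set.Ici 1) φ)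
    (hφmono : MonotoneOn φ (Set.Ici 1))
    (hφdiff : ∀ t, 1 ≤ t → DifferentiableAt ℝ φ t)
    (hφpos : ∀ t, 1 ≤ t → 0 < φ t)
    (hφderiv0 : Tendsto (deriv φ) atTop (nhds 0))
    (ν : ℕ → Measure X) (hν : ∀ k, IsProbabilityMeasure (ν k))
    (εν εb : ℝ) (hεν : εν ∈ Set.Ioo (0:ℝ) 1) (hεb : εb ∈ Set.Ioo (0:ℝ) 1)
    (bV cV : ℝ)
    (hVint : ∀ k, 1 ≤ k → ∀ x, Integrable V (P k x))
    (hdrift : ∀ k, 1 ≤ k → ∀ x,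
      ∫ y, V y ∂(P k x) ≤ V x - φ (V x) + bV * C.indicator 1 x)
    (hminor : ∀ k, 1 ≤ k → ∀ x ∈ C, ∀ A : Set X, MeasurableSet A →
      ENNReal.ofReal εν * ν k A ≤ P k x A)
    (hout : ∀ x ∉ C, bV / (1 - εb) ≤ φ (V x))
    (hin : ∀ x ∈ C, V x ≤ cV)
    -- the coupling construction (Definition 5.1); the flag `true` indicates coupling:
    (Pbar : ℕ → Kernel ((X × X) × Bool) ((X × X) × Bool))
    (hPbar : ∀ k, IsMarkovKernel (Pbar k))
    (hbar_in : ∀ k, 1 ≤ k → ∀ x x' : X, x ∈ C → x' ∈ C →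
      Pbar k ((x, x'), false) =
        ENNReal.ofReal εν • ((ν k).map fun y => ((y, y), true)) +
        ENNReal.ofReal (1 - εν) •
          (((Qmeas P ν εν k x).prod (Qmeas P ν εν k x')).map fun p => (p, false)))
    (hbar_out : ∀ k, 1 ≤ k → ∀ x x' : X, ¬(x ∈ C ∧ x' ∈ C) →
      Pbar k ((x, x'), false) =
        (((P k x).prod (P k x')).map fun p => (p, false)))
    (hbar_diag : ∀ k, 1 ≤ k → ∀ x : X,
      Pbar k ((x, x), true) = (P k x).map fun y => ((y, y), true))
    (hbar_ne : ∀ k, 1 ≤ k → ∀ x x' : X, x ≠ x' →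
      Pbar k ((x, x'), true) = Measure.dirac ((x, x'), true)) :
    ∀ x x' : X,
      ∑' n : ℕ, ∫⁻ s : (X × X) × Bool,
          (if s.2 = false then ENNReal.ofReal (φ (V s.1.1 + V s.1.2 - 1)) else 0)
            ∂(iterKernel Pbar n ((x, x'), false)) ≤
        ENNReal.ofReal (εb⁻¹ * (V x + V x' - 1) + bbar φ εb bV / (εb * εν)) :=
  statement14_general P hP C V hVmeas hV1 φ hφconc hφmono hφpos ν hν εν εb hεν hεb bV hVint hdrift
    hminor hout Pbar hbar_in hbar_out hbar_diag hbar_ne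
end
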